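/- Let n ≥ 1 and let Φ ⊆ BC_n be a root subsystem. Define P(Φ) := {β ∈ B_n : there exists a nonzero real t with t·β ∈ Φ}, where B_n = {±e_i ± e_j : i ≠ j} ∪ {±e_i : 1 ≤ i ≤ n}. Then P(Φ) is a root subsystem of BC_n, and the sets of root hyperplanes coincide: {ker⟨α,·⟩ : α ∈ Φ} = {ker⟨β,·⟩ : β ∈ P(Φ)} as sets of linear subspaces of ℝ^n. -/

import Mathlib

open Finset

noncomputable section

/-- Standard basis vector `e i` of `ℝ^n`. -/
def E {n : ℕ} (i : Fin n) : Fin n → ℝ := Pi.single i 1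

/-- Standard inner product on `ℝ^n`. -/
def dot {n : ℕ} (v w : Fin n → ℝ) : ℝ := ∑ i, v i * w i

/-- Reflection across the hyperplane orthogonal to `α`. -/
def reflRoot {n : ℕ} (α v : Fin n → ℝ) : Fin n → ℝ := v - (2 * dot v α / dot α α) • α

/-- The root system `A_{n-1}`. -/
def Aset (n : ℕ) : Set (Fin n → ℝ) := {α | ∃ i j : Fin n, i ≠ j ∧ α = E i - E j}

/-- The root system `D_n`. -/
def Dset (n : ℕ) : Set (Fin n → ℝ) :=
  {α | ∃ i j : Fin n, i ≠ j ∧ (α = E i - E j ∨ α = E i + E j ∨ α = -(E i + E j))}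

/-- The root system `B_n`. -/
def Bset (n : ℕ) : Set (Fin n → ℝ) := Dset n ∪ {α | ∃ i : Fin n, α = E i ∨ α = -E i}

/-- The root system `C_n`. -/
def Cset (n : ℕ) : Set (Fin n → ℝ) :=
  Dset n ∪ {α | ∃ i : Fin n, α = (2:ℝ) • E i ∨ α = -((2:ℝ) • E i)}

/-- The nonreduced root system `BC_n`. -/
def BCset (n : ℕ) : Set (Fin n → ℝ) := Bset n ∪ Cset n

/-!
The reflection `reflRoot α β` is unchanged when `α` is rescaled and is linear in `β`, so
`reflRoot (t • α) (s • β) = s • reflRoot α β`; this transports the closure of `Φ` to `P(Φ)`,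
provided `B_n` itself is closed under its reflections. That holds because `B_n` is exactly the
set of integer vectors of squared length `1` or `2`: for such `α` the coefficient
`2⟨β,α⟩/⟨α,α⟩` is an integer, and reflections preserve length. Every root of `BC_n` is a
nonzero multiple of a root of `B_n`, and rescaling a vector does not change its hyperplane.
-/

open Matrix

section

variable {n : ℕ}

lemma dot_eq_dotProduct (v w : Fin n → ℝ) : dot v w = v ⬝ᵥ w := rfl

lemma reflRoot_smul_smul (α β : Fin n → ℝ) {t : ℝ} (ht : t ≠ 0) (s : ℝ) :
    reflRoot (t • α) (s • β) = s • reflRoot α β := by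
  simp only [reflRoot, dot_eq_dotProduct, smul_dotProduct, dotProduct_smul, smul_eq_mul,
    smul_sub, smul_smul]
  congr 2
  rcases eq_or_ne (α ⬝ᵥ α) 0 with h | h
  · simp [h]
  · field_simp

lemma dotProduct_reflRoot_self (α β : Fin n → ℝ) (hα : α ⬝ᵥ α ≠ 0) :
    reflRoot α β ⬝ᵥ reflRoot α β = β ⬝ᵥ β := by
  simp only [reflRoot, dot_eq_dotProduct, sub_dotProduct, dotProduct_sub, smul_dotProduct,
    dotProduct_smul, smul_eq_mul, dotProduct_comm α β]
  field_simp
  ring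

lemma setOf_dot_smul_eq_zero {c : ℝ} (hc : c ≠ 0) (β : Fin n → ℝ) :
    {v : Fin n → ℝ | dot (c • β) v = 0} = {v | dot β v = 0} := by
  ext v
  simp [dot_eq_dotProduct, smul_dotProduct, hc]

lemma dotProduct_self_sub_apply_smul_E (v : Fin n → ℝ) (i : Fin n) :
    (v - v i • E i) ⬝ᵥ (v - v i • E i) = v ⬝ᵥ v - v i * v i := by
  simp [E, sub_dotProduct, dotProduct_sub, dotProduct_comm v]

def intLattice (n : ℕ) : AddSubgroup (Fin n → ℝ) :=
  AddSubgroup.pi Set.univ fun _ => (Int.castAddHom ℝ).range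

lemma mem_intLattice {v : Fin n → ℝ} : v ∈ intLattice n ↔ ∀ i, ∃ k : ℤ, (k : ℝ) = v i := by
  simp only [intLattice, AddSubgroup.mem_pi, Set.mem_univ, true_imp_iff, AddMonoidHom.mem_range,
    Int.coe_castAddHom]

lemma E_mem_intLattice (i : Fin n) : E i ∈ intLattice n := by
  refine mem_intLattice.2 fun m => ?_
  rcases eq_or_ne m i with rfl | h
  · exact ⟨1, by simp [E]⟩
  · exact ⟨0, by simp [E, h]⟩

lemma apply_smul_E_mem_intLattice {v : Fin n → ℝ} (hv : v ∈ intLattice n) (i : Fin n) :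
    v i • E i ∈ intLattice n := by
  obtain ⟨k, hk⟩ := mem_intLattice.1 hv i
  rw [← hk, Int.cast_smul_eq_zsmul]
  exact zsmul_mem (E_mem_intLattice i) k

lemma exists_intCast_eq_dotProduct {v w : Fin n → ℝ} (hv : v ∈ intLattice n)
    (hw : w ∈ intLattice n) : ∃ k : ℤ, (k : ℝ) = v ⬝ᵥ w := by
  choose f hf using mem_intLattice.1 hv
  choose g hg using mem_intLattice.1 hw
  exact ⟨∑ i, f i * g i, by push_cast; simp [dotProduct, hf, hg]⟩

lemma apply_eq_one_or_neg_one_of_mem_intLattice {v : Fin n → ℝ} (hv : v ∈ intLattice n)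
    (hle : v ⬝ᵥ v ≤ 2) {i : Fin n} (hi : v i ≠ 0) : v i = 1 ∨ v i = -1 := by
  obtain ⟨k, hk⟩ := mem_intLattice.1 hv i
  have hsq : v i * v i ≤ v ⬝ᵥ v :=
    Finset.single_le_sum (f := fun j => v j * v j) (fun j _ => mul_self_nonneg (v j))
      (Finset.mem_univ i)
  rw [← hk] at hsq hi ⊢
  have hk2 : k * k ≤ 2 := by exact_mod_cast hsq.trans hle
  have hk0 : k ≠ 0 := by exact_mod_cast hi
  have hk_bound : -1 ≤ k ∧ k ≤ 1 := by constructor <;> nlinarith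
  rcases (by omega : k = 1 ∨ k = -1) with rfl | rfl <;> simp

lemma exists_eq_E_or_eq_neg_E {v : Fin n → ℝ} (hv : v ∈ intLattice n) (h1 : v ⬝ᵥ v = 1) :
    ∃ i, v = E i ∨ v = -E i := by
  obtain ⟨i, hi⟩ : ∃ i, v i ≠ 0 := Function.ne_iff.1 (by rintro rfl; simp at h1)
  have hvi := apply_eq_one_or_neg_one_of_mem_intLattice hv (by rw [h1]; norm_num) hi
  have hv_eq : v = v i • E i := by
    rw [← sub_eq_zero, ← dotProduct_self_eq_zero, dotProduct_self_sub_apply_smul_E, h1]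
    rcases hvi with h | h <;> rw [h] <;> norm_num
  refine ⟨i, ?_⟩
  rcases hvi with h | h <;> rw [hv_eq, h] <;> simp

/-- Split off a coordinate `±1` of `v`; the remaining vector has squared length `1`. -/
lemma mem_Dset_of_dotProduct_self_eq_two {v : Fin n → ℝ} (hv : v ∈ intLattice n)
    (h2 : v ⬝ᵥ v = 2) : v ∈ Dset n := by
  obtain ⟨i, hi⟩ : ∃ i, v i ≠ 0 := Function.ne_iff.1 (by rintro rfl; simp at h2)
  have hvi := apply_eq_one_or_neg_one_of_mem_intLattice hv h2.le hi
  obtain ⟨j, hj⟩ : ∃ j, v - v i • E i = E j ∨ v - v i • E i = -E j := by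
    refine exists_eq_E_or_eq_neg_E (sub_mem hv (apply_smul_E_mem_intLattice hv i)) ?_
    rw [dotProduct_self_sub_apply_smul_E, h2]
    rcases hvi with h | h <;> rw [h] <;> norm_num
  have hij : i ≠ j := by
    rintro rfl
    have hvi0 : (v - v i • E i) i = 0 := by simp [E]
    rcases hj with h | h <;> rw [h] at hvi0 <;> simp [E] at hvi0
  have hv_eq : v = v i • E i + (v - v i • E i) := by abel
  rcases hvi with h | h <;> rcases hj with h' | h' <;> rw [hv_eq, h', h]
  · exact ⟨i, j, hij, Or.inr (Or.inl (by simp))⟩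
  · exact ⟨i, j, hij, Or.inl (by simp [sub_eq_add_neg])⟩
  · exact ⟨j, i, hij.symm, Or.inl (by simp; abel)⟩
  · exact ⟨i, j, hij, Or.inr (Or.inr (by simp; abel))⟩

lemma mem_Bset_iff {v : Fin n → ℝ} :
    v ∈ Bset n ↔ v ∈ intLattice n ∧ (v ⬝ᵥ v = 1 ∨ v ⬝ᵥ v = 2) := by
  constructor
  · have hE := E_mem_intLattice (n := n)
    rintro (⟨i, j, hij, rfl | rfl | rfl⟩ | ⟨i, rfl | rfl⟩)
    · refine ⟨sub_mem (hE i) (hE j), Or.inr ?_⟩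
      simp [E, dotProduct_sub, hij, hij.symm]
      norm_num
    · refine ⟨add_mem (hE i) (hE j), Or.inr ?_⟩
      simp [E, dotProduct_add, hij, hij.symm]
      norm_num
    · refine ⟨neg_mem (add_mem (hE i) (hE j)), Or.inr ?_⟩
      simp [E, dotProduct_add, hij, hij.symm]
      norm_num
    · exact ⟨hE i, Or.inl (by simp [E])⟩
    · exact ⟨neg_mem (hE i), Or.inl (by simp [E])⟩
  · rintro ⟨hv, h1 | h2⟩
    · exact Or.inr (exists_eq_E_or_eq_neg_E hv h1)
    · exact Or.inl (mem_Dset_of_dotProduct_self_eq_two hv h2)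

lemma reflRoot_mem_Bset {α β : Fin n → ℝ} (hα : α ∈ Bset n) (hβ : β ∈ Bset n) :
    reflRoot α β ∈ Bset n := by
  obtain ⟨hαL, hαα⟩ := mem_Bset_iff.1 hα
  obtain ⟨hβL, hββ⟩ := mem_Bset_iff.1 hβ
  obtain ⟨d, hd⟩ := exists_intCast_eq_dotProduct hβL hαL
  obtain ⟨c, hc⟩ : ∃ c : ℤ, (c : ℝ) = 2 * (β ⬝ᵥ α) / (α ⬝ᵥ α) := by
    rcases hαα with h | h
    · exact ⟨2 * d, by rw [h, ← hd]; push_cast; ring⟩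
    · exact ⟨d, by rw [h, ← hd]; ring⟩
  refine mem_Bset_iff.2 ⟨?_, ?_⟩
  · rw [reflRoot, dot_eq_dotProduct, dot_eq_dotProduct, ← hc, Int.cast_smul_eq_zsmul]
    exact sub_mem hβL (zsmul_mem hαL c)
  · rwa [dotProduct_reflRoot_self α β (by rcases hαα with h | h <;> rw [h] <;> norm_num)]

lemma exists_smul_eq_of_mem_BCset {α : Fin n → ℝ} (hα : α ∈ BCset n) :
    ∃ β ∈ Bset n, ∃ t : ℝ, t ≠ 0 ∧ t • β = α := by
  rcases hα with hB | hD | ⟨i, rfl | rfl⟩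
  · exact ⟨α, hB, 1, one_ne_zero, one_smul ℝ α⟩
  · exact ⟨α, Or.inl hD, 1, one_ne_zero, one_smul ℝ α⟩
  · exact ⟨E i, Or.inr ⟨i, Or.inl rfl⟩, 2, two_ne_zero, rfl⟩
  · exact ⟨-E i, Or.inr ⟨i, Or.inr rfl⟩, 2, two_ne_zero, smul_neg 2 (E i)⟩

end

theorem stmt17_general (n : ℕ) (Φ : Set (Fin n → ℝ)) (hsub : Φ ⊆ BCset n)
    (hcl : ∀ α ∈ Φ, ∀ β ∈ Φ, reflRoot α β ∈ Φ)
    (PΦ : Set (Fin n → ℝ))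
    (hP : PΦ = {β | β ∈ Bset n ∧ ∃ t : ℝ, t ≠ 0 ∧ t • β ∈ Φ}) :
    PΦ ⊆ BCset n ∧
    (∀ α ∈ PΦ, ∀ β ∈ PΦ, reflRoot α β ∈ PΦ) ∧
    {H : Set (Fin n → ℝ) | ∃ α ∈ Φ, H = {v | dot α v = 0}} =
      {H : Set (Fin n → ℝ) | ∃ β ∈ PΦ, H = {v | dot β v = 0}} := by
  subst hP
  refine ⟨fun β hβ => Or.inl hβ.1, ?_, ?_⟩
  · rintro α ⟨hαB, t, ht, htα⟩ β ⟨hβB, s, hs, hsβ⟩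
    refine ⟨reflRoot_mem_Bset hαB hβB, s, hs, ?_⟩
    rw [← reflRoot_smul_smul α β ht s]
    exact hcl _ htα _ hsβ
  · ext H
    constructor
    · rintro ⟨α, hαΦ, rfl⟩
      obtain ⟨β, hβB, t, ht, rfl⟩ := exists_smul_eq_of_mem_BCset (hsub hαΦ)
      exact ⟨β, ⟨hβB, t, ht, hαΦ⟩, setOf_dot_smul_eq_zero ht β⟩
    · rintro ⟨β, ⟨-, t, ht, htβ⟩, rfl⟩
      exact ⟨t • β, htβ, (setOf_dot_smul_eq_zero ht β).symm⟩

/-- The 'short lift' `P(Φ)` of a root subsystem `Φ ⊆ BC_n` is again a root subsystem,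
with the same set of root hyperplanes. -/
theorem stmt17 (n : ℕ) (hn : 1 ≤ n) (Φ : Set (Fin n → ℝ)) (hsub : Φ ⊆ BCset n)
    (hcl : ∀ α ∈ Φ, ∀ β ∈ Φ, reflRoot α β ∈ Φ)
    (PΦ : Set (Fin n → ℝ))
    (hP : PΦ = {β | β ∈ Bset n ∧ ∃ t : ℝ, t ≠ 0 ∧ t • β ∈ Φ}) :
    PΦ ⊆ BCset n ∧
    (∀ α ∈ PΦ, ∀ β ∈ PΦ, reflRoot α β ∈ PΦ) ∧
    {H : Set (Fin n → ℝ) | ∃ α ∈ Φ, H = {v | dot α v = 0}} =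
      {H : Set (Fin n → ℝ) | ∃ β ∈ PΦ, H = {v | dot β v = 0}} :=
  stmt17_general n Φ hsub hcl PΦ hP
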